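/- (Left Join lemma, joined-tuple case.) Let T1 and T2 be tables with schemas S1 and S2 and common columns C = S1 ∩ S2 with C nonempty. Assume T1 and T2 are each in minimal form and every tuple of T1 and of T2 is non-null on every attribute of C. Then no tuple of T1 ⋈ T2 is subsumed by any tuple of (T1 ⋈ T2) ⊎ T1; consequently T1 ⋈ T2 ⊆ β((T1 ⋈ T2) ⊎ T1). -/
import Mathlib


/- A tuple is a function from attributes to optional values (`none` = null). -/
variable {A V : Type*} [DecidableEq A] [DecidableEq V]

/-- Tuple `t1` subsumes tuple `t2`. -/
def Subsumes (t1 t2 : A → Option V) : Prop :=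
  (∀ a, t2 a ≠ none → t1 a = t2 a) ∧ ∃ a, t1 a ≠ none ∧ t2 a = none

/-- The subsumption operator β: tuples of `T` not subsumed by any tuple of `T`. -/
def beta (T : Set (A → Option V)) : Set (A → Option V) :=
  {t ∈ T | ¬ ∃ t' ∈ T, Subsumes t' t}

/-- Complementary tuples. -/
def Complementary (t1 t2 : A → Option V) : Prop :=
  (∃ a, t1 a = t2 a ∧ t1 a ≠ none) ∧
  (∀ a, t1 a ≠ none → t2 a ≠ none → t1 a = t2 a) ∧
  (∃ a, t1 a ≠ none ∧ t2 a = none) ∧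
  (∃ a, t2 a ≠ none ∧ t1 a = none)

/-- The complementation (merge) of two tuples. -/
def mergeT (t1 t2 : A → Option V) : A → Option V :=
  fun a => match t1 a with
    | some v => some v
    | none => t2 a

/-- A table `T` has schema `S`: every tuple is null outside `S`. -/
def HasSchema (T : Set (A → Option V)) (S : Set A) : Prop :=
  ∀ t ∈ T, ∀ a ∉ S, t a = none

/-- Tuples are joinable on common columns `C`. -/
def Joinable (C : Set A) (t1 t2 : A → Option V) : Prop :=
  ∀ a ∈ C, t1 a = t2 a ∧ t1 a ≠ none

/-- Inner join on common columns `C`. -/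
def innerJoin (C : Set A) (T1 T2 : Set (A → Option V)) : Set (A → Option V) :=
  {t | ∃ t1 ∈ T1, ∃ t2 ∈ T2, Joinable C t1 t2 ∧ t = mergeT t1 t2}

/-- Left outer join on common columns `C`. -/
def leftJoin (C : Set A) (T1 T2 : Set (A → Option V)) : Set (A → Option V) :=
  innerJoin C T1 T2 ∪ {t1 ∈ T1 | ¬ ∃ t2 ∈ T2, Joinable C t1 t2}

/-- Full outer join on common columns `C`. -/
def fullJoin (C : Set A) (T1 T2 : Set (A → Option V)) : Set (A → Option V) :=
  innerJoin C T1 T2 ∪ {t1 ∈ T1 | ¬ ∃ t2 ∈ T2, Joinable C t1 t2}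
    ∪ {t2 ∈ T2 | ¬ ∃ t1 ∈ T1, Joinable C t1 t2}

/-- A table is in minimal form: no tuple subsumes another, no two tuples are complementary. -/
def MinimalForm (T : Set (A → Option V)) : Prop :=
  (∀ t1 ∈ T, ∀ t2 ∈ T, ¬ Subsumes t1 t2) ∧
  (∀ t1 ∈ T, ∀ t2 ∈ T, ¬ Complementary t1 t2)

lemma mergeT_left' {t1 t2 : A → Option V} {a : A} (h : t1 a ≠ none) :
    mergeT t1 t2 a = t1 a := by
  cases h1 : t1 a <;> simp [mergeT, h1] at h ⊢

lemma mergeT_right' {t1 t2 : A → Option V} {a : A} (h : t1 a = none) :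
    mergeT t1 t2 a = t2 a := by
  simp [mergeT, h]

/-- Left Join lemma, joined-tuple case: no tuple of `T1 ⋈ T2` is subsumed by any
tuple of `(T1 ⋈ T2) ⊎ T1`; consequently `T1 ⋈ T2 ⊆ β((T1 ⋈ T2) ⊎ T1)`. -/
theorem innerJoin_not_subsumed
    (T1 T2 : Set (A → Option V)) (S1 S2 : Set A)
    (hfin1 : T1.Finite) (hfin2 : T2.Finite)
    (hs1 : HasSchema T1 S1) (hs2 : HasSchema T2 S2)
    (hC : (S1 ∩ S2).Nonempty)
    (hmin1 : MinimalForm T1) (hmin2 : MinimalForm T2)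
    (hnn1 : ∀ t ∈ T1, ∀ a ∈ S1 ∩ S2, t a ≠ none)
    (hnn2 : ∀ t ∈ T2, ∀ a ∈ S1 ∩ S2, t a ≠ none) :
    (∀ t ∈ innerJoin (S1 ∩ S2) T1 T2,
      ∀ t' ∈ innerJoin (S1 ∩ S2) T1 T2 ∪ T1, ¬ Subsumes t' t) ∧
    innerJoin (S1 ∩ S2) T1 T2 ⊆ beta (innerJoin (S1 ∩ S2) T1 T2 ∪ T1) := by
  have main : ∀ t ∈ innerJoin (S1 ∩ S2) T1 T2,
      ∀ t' ∈ innerJoin (S1 ∩ S2) T1 T2 ∪ T1, ¬ Subsumes t' t := by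
    rintro t ⟨t1, ht1, t2, ht2, hj, rfl⟩ t' ht' ⟨hsub, a0, ha0, ha0'⟩
    have hta0 : t1 a0 = none ∧ t2 a0 = none := by
      by_cases h1 : t1 a0 = none
      · exact ⟨h1, by rw [← mergeT_right' (t2 := t2) h1]; exact ha0'⟩
      · exact absurd ((mergeT_left' (t2 := t2) h1).symm.trans ha0') h1
    rcases ht' with ⟨u1, hu1, u2, hu2, hju, rfl⟩ | ht'T1
    · -- t' is a joined tuple merge u1 u2
      have hu1t1 : ∀ a, t1 a ≠ none → u1 a = t1 a := by
        intro a ha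
        have htv : mergeT t1 t2 a = t1 a := mergeT_left' ha
        have h' : mergeT u1 u2 a = t1 a := by
          rw [hsub a (by rw [htv]; exact ha), htv]
        by_cases h1 : u1 a = none
        · have hu2a : u2 a = t1 a := by
            rw [← mergeT_right' (t2 := u2) h1, h']
          have haS1 : a ∈ S1 := by
            by_contra h; exact ha (hs1 t1 ht1 a h)
          have haS2 : a ∈ S2 := by
            by_contra h; exact ha (hu2a ▸ hs2 u2 hu2 a h)
          exact absurd ((hju a ⟨haS1, haS2⟩).2) (by simp [h1])
        · rw [← mergeT_left' (t2 := u2) h1, h']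
      by_cases hEq1 : u1 = t1
      · subst hEq1
        have hu2t2 : ∀ a, t2 a ≠ none → u2 a = t2 a := by
          intro a ha
          by_cases h1 : u1 a = none
          · have htv : mergeT u1 t2 a = t2 a := mergeT_right' h1
            have h' : mergeT u1 u2 a = t2 a := by
              rw [hsub a (by rw [htv]; exact ha), htv]
            rw [← mergeT_right' (t2 := u2) h1, h']
          · have haS1 : a ∈ S1 := by
              by_contra h; exact h1 (hs1 u1 ht1 a h)
            have haS2 : a ∈ S2 := by
              by_contra h; exact ha (hs2 t2 ht2 a h)
            have e1 := (hju a ⟨haS1, haS2⟩).1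
            have e2 := (hj a ⟨haS1, haS2⟩).1
            rw [← e1, ← e2]
        by_cases hEq2 : u2 = t2
        · subst hEq2; exact ha0 ha0'
        · have : ∃ a, u2 a ≠ t2 a := by
            by_contra h; push_neg at h; exact hEq2 (funext h)
          obtain ⟨a, ha⟩ := this
          have ht2a : t2 a = none := by
            by_contra h; exact ha (hu2t2 a h)
          exact hmin2.1 u2 hu2 t2 ht2
            ⟨hu2t2, a, fun h => ha (h.trans ht2a.symm), ht2a⟩
      · have : ∃ a, u1 a ≠ t1 a := by
          by_contra h; push_neg at h; exact hEq1 (funext h)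
        obtain ⟨a, ha⟩ := this
        have ht1a : t1 a = none := by
          by_contra h; exact ha (hu1t1 a h)
        exact hmin1.1 u1 hu1 t1 ht1
          ⟨hu1t1, a, fun h => ha (h.trans ht1a.symm), ht1a⟩
    · -- t' ∈ T1 : then t' subsumes t1, contradiction
      refine hmin1.1 t' ht'T1 t1 ht1 ⟨?_, a0, ha0, hta0.1⟩
      intro a ha
      rw [hsub a (by rw [mergeT_left' ha]; exact ha), mergeT_left' ha]
  exact ⟨main, fun t ht => ⟨Or.inl ht, fun ⟨t', ht', hsub⟩ => main t ht t' ht' hsub⟩⟩
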